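/- arXiv:2208.14129 — 4 statements merged into one kernel-verified Lean document; each statement's English description precedes it below -/
import Mathlib

section
/- Let x₁,…,xₙ be independent random variables each taking value 1 with probability p and 0 with probability 1-p, and let g : [0,1]ⁿ → ℝ be 1-Lipschitz with respect to the ℓ₁ norm. Let X = (x₁,…,xₙ). Then for all 0 ≤ ε ≤ 1, P[|g(X) - E[g(X)]| ≥ εpn] ≤ 2 e^{-ε²pn/3}. -/
/-!
Reveal the coordinates one at a time. Conditioning on the first coordinate splits the mean of `g`
as `p H₁ + (1 - p) H₀` with `|H₁ - H₀| ≤ 1`, so the first increment of the Doob martingale is a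
centred two-point variable whose exponential moment at `λ ≥ 0` is at most `exp (p (e^λ - λ - 1))`.
By induction `E exp (λ (g - E g)) ≤ exp (n p (e^λ - λ - 1))`, for `g` and `-g` alike, and Markov's
inequality at `λ = 2ε/3`, where `e^λ - λ - 1 ≤ ε²/3`, gives the bound. Since the `xᵢ` are almost
surely `0` or `1`, all expectations are finite sums over `{0,1}ⁿ` with product weights.
-/

open MeasureTheory ProbabilityTheory

namespace BernoulliConcentration

open Real Finset

section Scalar

lemma exp_sub_sub_one_le_of_le {a b : ℝ} (ha : 0 ≤ a) (hab : a ≤ b) :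
    exp a - a - 1 ≤ exp b - b - 1 := by
  have hb : exp a * (b - a + 1) ≤ exp b := by
    rw [show b = a + (b - a) by ring, exp_add, add_sub_cancel_left]
    exact mul_le_mul_of_nonneg_left (by linarith [add_one_le_exp (b - a)]) (exp_nonneg a)
  nlinarith [one_le_exp ha]

lemma exp_sub_sub_one_le_of_abs_le {u l : ℝ} (h : |u| ≤ l) :
    exp u - u - 1 ≤ exp l - l - 1 := by
  rcases le_total 0 u with hu | hu
  · exact exp_sub_sub_one_le_of_le hu ((le_abs_self u).trans h)
  · have hsinh : -u ≤ sinh (-u) := self_le_sinh_iff.2 (neg_nonneg.2 hu)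
    rw [sinh_eq, neg_neg] at hsinh
    have := exp_sub_sub_one_le_of_le (neg_nonneg.2 hu) ((neg_le_abs u).trans h)
    linarith

lemma mul_exp_add_one_sub_mul_exp_le (p u : ℝ) :
    p * exp (u * (1 - p)) + (1 - p) * exp (-(u * p)) ≤ exp (p * (exp u - u - 1)) := by
  calc p * exp (u * (1 - p)) + (1 - p) * exp (-(u * p))
      = exp (-(u * p)) * (1 + p * (exp u - 1)) := by
        rw [show u * (1 - p) = u + -(u * p) by ring, exp_add]; ring
    _ ≤ exp (-(u * p)) * exp (p * (exp u - 1)) := by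
        gcongr; linarith [add_one_le_exp (p * (exp u - 1))]
    _ = exp (p * (exp u - u - 1)) := by rw [← exp_add]; congr 1; ring

lemma exp_two_thirds_sub_sub_one_le {ε : ℝ} (h0 : 0 ≤ ε) (h1 : ε ≤ 1) :
    exp (2 * ε / 3) - 2 * ε / 3 - 1 ≤ ε ^ 2 / 3 := by
  have hb := exp_bound' (x := 2 * ε / 3) (by linarith) (by linarith) (n := 4) (by norm_num)
  simp only [sum_range_succ, Nat.factorial] at hb
  norm_num at hb
  nlinarith [pow_le_pow_of_le_one h0 h1 (show 2 ≤ 3 by norm_num),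
    pow_le_pow_of_le_one h0 h1 (show 2 ≤ 4 by norm_num)]

lemma one_le_exp_add_exp_of_le_abs {x t l : ℝ} (hl : 0 ≤ l) (h : t ≤ |x|) :
    1 ≤ exp (l * (x - t)) + exp (l * (-x - t)) := by
  rcases le_abs'.1 h with h | h
  · linarith [one_le_exp (mul_nonneg hl (by linarith : 0 ≤ -x - t)), exp_pos (l * (x - t))]
  · linarith [one_le_exp (mul_nonneg hl (by linarith : 0 ≤ x - t)), exp_pos (l * (-x - t))]

end Scalar

section Cube

variable {ι : Type*} [Fintype ι] {p : ℝ}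

def bernoulliWeight (p : ℝ) (s : ι → Bool) : ℝ :=
  ∏ i, if s i then p else 1 - p

lemma bernoulliWeight_nonneg (hp0 : 0 ≤ p) (hp1 : p ≤ 1) (s : ι → Bool) :
    0 ≤ bernoulliWeight p s :=
  prod_nonneg fun i _ => by split_ifs <;> linarith

variable [DecidableEq ι]

def bernoulliMean (p : ℝ) (F : (ι → Bool) → ℝ) : ℝ :=
  ∑ s, bernoulliWeight p s * F s

lemma bernoulliMean_mul_left (c : ℝ) (F : (ι → Bool) → ℝ) :
    bernoulliMean p (fun s => c * F s) = c * bernoulliMean p F := by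
  simp only [bernoulliMean, mul_sum, mul_left_comm]

lemma bernoulliMean_sub (F F' : (ι → Bool) → ℝ) :
    bernoulliMean p (fun s => F s - F' s) = bernoulliMean p F - bernoulliMean p F' := by
  simp only [bernoulliMean, mul_sub, sum_sub_distrib]

lemma bernoulliMean_neg (F : (ι → Bool) → ℝ) :
    bernoulliMean p (fun s => -F s) = -bernoulliMean p F := by
  simp only [bernoulliMean, mul_neg, sum_neg_distrib]

lemma bernoulliMean_mono (hp0 : 0 ≤ p) (hp1 : p ≤ 1) {F F' : (ι → Bool) → ℝ}
    (h : ∀ s, F s ≤ F' s) : bernoulliMean p F ≤ bernoulliMean p F' := by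
  unfold bernoulliMean
  gcongr with s
  · exact bernoulliWeight_nonneg hp0 hp1 s
  · exact h s

lemma bernoulliMean_cons {n : ℕ} (F : (Fin (n + 1) → Bool) → ℝ) :
    bernoulliMean p F = p * bernoulliMean p (fun t => F (Fin.cons true t))
      + (1 - p) * bernoulliMean p (fun t => F (Fin.cons false t)) := by
  simp only [bernoulliMean, mul_sum]
  rw [← (Fin.consEquiv fun _ => Bool).sum_comp, Fintype.sum_prod_type, Fintype.sum_bool]
  simp [Fin.consEquiv, bernoulliWeight, Fin.prod_univ_succ, mul_assoc]

lemma bernoulliMean_const (p c : ℝ) : ∀ {n : ℕ}, bernoulliMean p (fun _ : Fin n → Bool => c) = c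
  | 0 => by simp [bernoulliMean, bernoulliWeight]
  | n + 1 => by rw [bernoulliMean_cons, bernoulliMean_const]; ring

lemma abs_bernoulliMean_le (hp0 : 0 ≤ p) (hp1 : p ≤ 1) {n : ℕ} {F : (Fin n → Bool) → ℝ} {C : ℝ}
    (h : ∀ s, |F s| ≤ C) : |bernoulliMean p F| ≤ C := by
  rw [abs_le]
  constructor
  · simpa only [bernoulliMean_const] using
      bernoulliMean_mono hp0 hp1 (F := fun _ => -C) fun s => (abs_le.1 (h s)).1
  · simpa only [bernoulliMean_const] using
      bernoulliMean_mono hp0 hp1 (F' := fun _ => C) fun s => (abs_le.1 (h s)).2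

end Cube

section BoundedDifferences

def HasBoundedDifferences {ι : Type*} [DecidableEq ι] (G : (ι → Bool) → ℝ) : Prop :=
  ∀ s i b, |G (Function.update s i b) - G s| ≤ 1

variable {n : ℕ} {G : (Fin (n + 1) → Bool) → ℝ}

lemma HasBoundedDifferences.neg {ι : Type*} [DecidableEq ι] {G : (ι → Bool) → ℝ}
    (hG : HasBoundedDifferences G) : HasBoundedDifferences fun s => -G s := fun s i b => by
  simpa only [neg_sub_neg, abs_sub_comm] using hG s i b

lemma HasBoundedDifferences.comp_cons (hG : HasBoundedDifferences G) (b : Bool) :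
    HasBoundedDifferences fun t => G (Fin.cons b t) := fun t i c => by
  simpa only [Fin.cons_update] using hG (Fin.cons b t) i.succ c

lemma HasBoundedDifferences.abs_cons_true_sub_cons_false_le (hG : HasBoundedDifferences G)
    (t : Fin n → Bool) : |G (Fin.cons true t) - G (Fin.cons false t)| ≤ 1 := by
  simpa only [Fin.update_cons_zero] using hG (Fin.cons false t) 0 true

lemma hasBoundedDifferences_of_abs_sub_le_sum {ι : Type*} [Fintype ι] [DecidableEq ι]
    {g : (ι → ℝ) → ℝ}
    (hg : ∀ x y : ι → ℝ, (∀ i, x i ∈ Set.Icc (0:ℝ) 1) → (∀ i, y i ∈ Set.Icc (0:ℝ) 1) →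
      |g x - g y| ≤ ∑ i, |x i - y i|) :
    HasBoundedDifferences fun s : ι → Bool => g fun i => ((s i).toNat : ℝ) := by
  have hmem : ∀ b : Bool, ((b.toNat : ℕ) : ℝ) ∈ Set.Icc (0:ℝ) 1 := by
    intro b; cases b <;> simp
  intro s i b
  refine (hg _ _ (fun j => hmem _) (fun j => hmem _)).trans ?_
  rw [sum_eq_single i (fun j _ hj => by simp [Function.update_of_ne hj]) (by simp),
    Function.update_self]
  cases b <;> cases s i <;> simp

end BoundedDifferences

section Concentration

variable {p : ℝ}

theorem bernoulliMean_exp_le (hp0 : 0 ≤ p) (hp1 : p ≤ 1) {l : ℝ} (hl : 0 ≤ l) :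
    ∀ {n : ℕ} {G : (Fin n → Bool) → ℝ}, HasBoundedDifferences G →
      bernoulliMean p (fun s => exp (l * (G s - bernoulliMean p G)))
        ≤ exp (n * p * (exp l - l - 1))
  | 0, G, _ => by simp [bernoulliMean, bernoulliWeight]
  | n + 1, G, hG => by
    set c := exp l - l - 1
    set H : Bool → ℝ := fun b => bernoulliMean p fun t => G (Fin.cons b t) with hH
    set m := bernoulliMean p G
    set u := l * (H true - H false)
    have hm : m = p * H true + (1 - p) * H false := bernoulliMean_cons G
    have hsplit : ∀ b, bernoulliMean p (fun t => exp (l * (G (Fin.cons b t) - m)))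
        = exp (l * (H b - m)) * bernoulliMean p fun t => exp (l * (G (Fin.cons b t) - H b)) := by
      intro b
      rw [← bernoulliMean_mul_left]
      congr 1 with t
      rw [← exp_add]; congr 1; ring
    have hslice : ∀ b, bernoulliMean p (fun t => exp (l * (G (Fin.cons b t) - H b)))
        ≤ exp (n * p * c) := fun b => bernoulliMean_exp_le hp0 hp1 hl (hG.comp_cons b)
    have hu : |u| ≤ l := by
      rw [abs_mul, abs_of_nonneg hl, hH, ← bernoulliMean_sub]
      exact mul_le_of_le_one_right hl
        (abs_bernoulliMean_le hp0 hp1 hG.abs_cons_true_sub_cons_false_le)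
    have hincr : p * exp (u * (1 - p)) + (1 - p) * exp (-(u * p)) ≤ exp (p * c) :=
      (mul_exp_add_one_sub_mul_exp_le p u).trans <|
        exp_le_exp.2 <| mul_le_mul_of_nonneg_left (exp_sub_sub_one_le_of_abs_le hu) hp0
    have htrue : l * (H true - m) = u * (1 - p) := by rw [hm]; ring
    have hfalse : l * (H false - m) = -(u * p) := by rw [hm]; ring
    calc bernoulliMean p (fun s => exp (l * (G s - m)))
        = p * (exp (u * (1 - p)) *
              bernoulliMean p fun t => exp (l * (G (Fin.cons true t) - H true)))
          + (1 - p) * (exp (-(u * p)) *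
              bernoulliMean p fun t => exp (l * (G (Fin.cons false t) - H false))) := by
          rw [bernoulliMean_cons, hsplit, hsplit, htrue, hfalse]
      _ ≤ p * (exp (u * (1 - p)) * exp (n * p * c))
          + (1 - p) * (exp (-(u * p)) * exp (n * p * c)) := by
          gcongr
          · exact hslice true
          · exact hslice false
      _ = (p * exp (u * (1 - p)) + (1 - p) * exp (-(u * p))) * exp (n * p * c) := by ring
      _ ≤ exp (p * c) * exp (n * p * c) := by gcongr
      _ = exp ((n + 1 : ℕ) * p * c) := by rw [← exp_add]; push_cast; congr 1; ring

lemma sum_filter_le_abs_le_exp_moments (hp0 : 0 ≤ p) (hp1 : p ≤ 1) {n : ℕ}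
    (F : (Fin n → Bool) → ℝ) {l : ℝ} (hl : 0 ≤ l) (t : ℝ) :
    ∑ s ∈ univ.filter (fun s => t ≤ |F s|), bernoulliWeight p s
      ≤ bernoulliMean p (fun s => exp (l * (F s - t)))
        + bernoulliMean p (fun s => exp (l * (-F s - t))) := by
  rw [sum_filter, bernoulliMean, bernoulliMean, ← sum_add_distrib]
  gcongr with s
  have hw := bernoulliWeight_nonneg hp0 hp1 s
  split_ifs with h
  · rw [← mul_add]
    exact le_mul_of_one_le_right hw (one_le_exp_add_exp_of_le_abs hl h)
  · positivity

theorem sum_filter_abs_sub_bernoulliMean_le (hp0 : 0 ≤ p) (hp1 : p ≤ 1) {n : ℕ}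
    {G : (Fin n → Bool) → ℝ} (hG : HasBoundedDifferences G) {ε : ℝ} (hε0 : 0 ≤ ε)
    (hε1 : ε ≤ 1) :
    ∑ s ∈ univ.filter (fun s => ε * p * n ≤ |G s - bernoulliMean p G|), bernoulliWeight p s
      ≤ 2 * exp (-(ε ^ 2 * p * n) / 3) := by
  set l := 2 * ε / 3 with hl_def
  set t := ε * p * n with ht_def
  have hl : 0 ≤ l := by positivity
  have hexponent : n * p * (exp l - l - 1) - l * t ≤ -(ε ^ 2 * p * n) / 3 := by
    have hpn : 0 ≤ p * n := by positivity
    rw [hl_def, ht_def]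
    nlinarith [mul_le_mul_of_nonneg_left (exp_two_thirds_sub_sub_one_le hε0 hε1) hpn]
  have hmgf : ∀ {F : (Fin n → Bool) → ℝ}, HasBoundedDifferences F →
      bernoulliMean p (fun s => exp (l * (F s - bernoulliMean p F - t)))
        ≤ exp (-(ε ^ 2 * p * n) / 3) := by
    intro F hF
    calc bernoulliMean p (fun s => exp (l * (F s - bernoulliMean p F - t)))
        = exp (-(l * t)) * bernoulliMean p (fun s => exp (l * (F s - bernoulliMean p F))) := by
          rw [← bernoulliMean_mul_left]
          congr 1 with s
          rw [← exp_add]; congr 1; ring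
      _ ≤ exp (-(l * t)) * exp (n * p * (exp l - l - 1)) := by
          gcongr; exact bernoulliMean_exp_le hp0 hp1 hl hF
      _ ≤ exp (-(ε ^ 2 * p * n) / 3) := by rw [← exp_add]; gcongr; linarith
  have hupper := hmgf hG
  have hlower := hmgf hG.neg
  simp only [bernoulliMean_neg, sub_neg_eq_add, neg_add_eq_sub] at hlower
  calc _ ≤ _ :=
        sum_filter_le_abs_le_exp_moments hp0 hp1 (fun s => G s - bernoulliMean p G) hl t
    _ ≤ exp (-(ε ^ 2 * p * n) / 3) + exp (-(ε ^ 2 * p * n) / 3) := by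
        simpa only [neg_sub] using add_le_add hupper hlower
    _ = 2 * exp (-(ε ^ 2 * p * n) / 3) := (two_mul _).symm

end Concentration

section Transfer

variable {Ω : Type*} [MeasurableSpace Ω] {μ : Measure Ω}

lemma ae_eq_zero_or_eq_one [IsProbabilityMeasure μ] {f : Ω → ℝ} {p : ℝ} (hp0 : 0 ≤ p)
    (hp1 : p ≤ 1) (hf : Measurable f) (h1 : μ {ω | f ω = 1} = ENNReal.ofReal p)
    (h0 : μ {ω | f ω = 0} = ENNReal.ofReal (1 - p)) :
    ∀ᵐ ω ∂μ, f ω = 0 ∨ f ω = 1 := by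
  have hms : ∀ x : ℝ, MeasurableSet {ω | f ω = x} := fun x => hf (measurableSet_singleton x)
  have hdisj : Disjoint {ω | f ω = 0} {ω | f ω = 1} :=
    Set.disjoint_left.2 fun ω (h0 : f ω = 0) (h1 : f ω = 1) => zero_ne_one (h0.symm.trans h1)
  have hcompl : {ω | ¬(f ω = 0 ∨ f ω = 1)} = ({ω | f ω = 0} ∪ {ω | f ω = 1})ᶜ := by
    ext ω; simp
  rw [ae_iff, hcompl, prob_compl_eq_zero_iff ((hms 0).union (hms 1)),
    measure_union hdisj (hms 1), h0, h1, ← ENNReal.ofReal_add (by linarith) hp0]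
  norm_num

lemma measureReal_preimage_singleton_eq_bernoulliWeight [IsProbabilityMeasure μ]
    {ι : Type*} [Fintype ι] {p : ℝ} {Y : ι → Ω → Bool} (hY : ∀ i, Measurable (Y i))
    (hind : iIndepFun Y μ) (hp : ∀ i, μ.real (Y i ⁻¹' {true}) = p) (s : ι → Bool) :
    μ.real ((fun ω i => Y i ω) ⁻¹' {s}) = bernoulliWeight p s := by
  have hfiber : (fun ω i => Y i ω) ⁻¹' {s} = ⋂ i ∈ (univ : Finset ι), Y i ⁻¹' {s i} := by
    ext ω; simp [funext_iff]
  rw [hfiber, measureReal_def,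
    hind.measure_inter_preimage_eq_mul univ fun i _ => measurableSet_singleton _,
    ENNReal.toReal_prod]
  refine prod_congr rfl fun i _ => ?_
  rw [← measureReal_def]
  cases s i
  · have hfalse : Y i ⁻¹' {false} = (Y i ⁻¹' {true})ᶜ := by ext; simp
    rw [hfalse, probReal_compl_eq_one_sub (hY i (measurableSet_singleton true)), hp]
    simp
  · simpa using hp i

lemma integral_comp_eq_sum_measureReal_preimage [IsFiniteMeasure μ] {α : Type*} [Fintype α]
    [MeasurableSpace α] [MeasurableSingletonClass α] {Z : Ω → α} (hZ : Measurable Z)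
    (F : α → ℝ) : ∫ ω, F (Z ω) ∂μ = ∑ a, μ.real (Z ⁻¹' {a}) * F a := by
  rw [← integral_map hZ.aemeasurable (measurable_of_finite F).aestronglyMeasurable,
    integral_fintype Integrable.of_finite]
  simp [map_measureReal_apply hZ (measurableSet_singleton _)]

end Transfer

section BernoulliVector

variable {Ω ι : Type*} [MeasurableSpace Ω] {μ : Measure Ω} [IsProbabilityMeasure μ] [Fintype ι]
  {p : ℝ} {X : ι → Ω → ℝ}

noncomputable def toBits (X : ι → Ω → ℝ) (ω : Ω) (i : ι) : Bool := decide (X i ω = 1)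

lemma measurable_decide_eq_one : Measurable fun x : ℝ => decide (x = 1) :=
  measurable_to_bool <| by
    rw [show (fun x : ℝ => decide (x = 1)) ⁻¹' {true} = {1} by ext; simp]
    exact measurableSet_singleton 1

omit [Fintype ι] in
lemma measurable_toBits_apply (hmeas : ∀ i, Measurable (X i)) (i : ι) :
    Measurable fun ω => toBits X ω i :=
  measurable_decide_eq_one.comp (hmeas i)

omit [Fintype ι] in
lemma measurable_toBits (hmeas : ∀ i, Measurable (X i)) : Measurable (toBits X) :=
  measurable_pi_lambda _ (measurable_toBits_apply hmeas)

lemma ae_eq_toNat_toBits (hp0 : 0 ≤ p) (hp1 : p ≤ 1) (hmeas : ∀ i, Measurable (X i))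
    (hdist1 : ∀ i, μ {ω | X i ω = 1} = ENNReal.ofReal p)
    (hdist0 : ∀ i, μ {ω | X i ω = 0} = ENNReal.ofReal (1 - p)) :
    ∀ᵐ ω ∂μ, (fun i => X i ω) = fun i => ((toBits X ω i).toNat : ℝ) := by
  filter_upwards [ae_all_iff.2 fun i =>
    ae_eq_zero_or_eq_one hp0 hp1 (hmeas i) (hdist1 i) (hdist0 i)] with ω hω
  funext i
  rcases hω i with h | h <;> simp [toBits, h]

lemma measureReal_toBits_preimage_singleton (hp0 : 0 ≤ p) (hmeas : ∀ i, Measurable (X i))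
    (hindep : iIndepFun X μ) (hdist1 : ∀ i, μ {ω | X i ω = 1} = ENNReal.ofReal p)
    (s : ι → Bool) : μ.real (toBits X ⁻¹' {s}) = bernoulliWeight p s := by
  refine measureReal_preimage_singleton_eq_bernoulliWeight (measurable_toBits_apply hmeas)
    (hindep.comp _ fun _ => measurable_decide_eq_one) (fun i => ?_) s
  rw [measureReal_def, show (fun ω => toBits X ω i) ⁻¹' {true} = {ω | X i ω = 1} by
    ext; simp [toBits], hdist1 i, ENNReal.toReal_ofReal hp0]

variable [DecidableEq ι]

lemma integral_comp_eq_bernoulliMean (hp0 : 0 ≤ p) (hp1 : p ≤ 1) (hmeas : ∀ i, Measurable (X i))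
    (hindep : iIndepFun X μ) (hdist1 : ∀ i, μ {ω | X i ω = 1} = ENNReal.ofReal p)
    (hdist0 : ∀ i, μ {ω | X i ω = 0} = ENNReal.ofReal (1 - p)) (F : (ι → ℝ) → ℝ) :
    ∫ ω, F (fun i => X i ω) ∂μ = bernoulliMean p fun s => F fun i => ((s i).toNat : ℝ) := by
  rw [integral_congr_ae ((ae_eq_toNat_toBits hp0 hp1 hmeas hdist1 hdist0).mono
      fun ω h => congrArg F h),
    integral_comp_eq_sum_measureReal_preimage (measurable_toBits hmeas)
      fun s => F fun i => ((s i).toNat : ℝ)]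
  simp only [measureReal_toBits_preimage_singleton hp0 hmeas hindep hdist1, bernoulliMean]

lemma measureReal_setOf_comp_eq_sum_filter (hp0 : 0 ≤ p) (hp1 : p ≤ 1)
    (hmeas : ∀ i, Measurable (X i)) (hindep : iIndepFun X μ)
    (hdist1 : ∀ i, μ {ω | X i ω = 1} = ENNReal.ofReal p)
    (hdist0 : ∀ i, μ {ω | X i ω = 0} = ENNReal.ofReal (1 - p)) (P : (ι → ℝ) → Prop)
    [DecidablePred P] :
    μ.real {ω | P fun i => X i ω}
      = ∑ s ∈ univ.filter (fun s => P fun i => ((s i).toNat : ℝ)), bernoulliWeight p s := by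
  calc μ.real {ω | P fun i => X i ω}
      = μ.real (toBits X ⁻¹' ↑(univ.filter fun s : ι → Bool => P fun i => ((s i).toNat : ℝ))) :=
        measureReal_congr <| Filter.eventuallyEq_set.2 <|
          (ae_eq_toNat_toBits hp0 hp1 hmeas hdist1 hdist0).mono fun ω h => by simp [h]
    _ = _ := (sum_measureReal_preimage_singleton _ fun s _ =>
        measurable_toBits hmeas (measurableSet_singleton s)).symm
    _ = _ := sum_congr rfl fun s _ =>
        measureReal_toBits_preimage_singleton hp0 hmeas hindep hdist1 s

end BernoulliVector

end BernoulliConcentration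

open BernoulliConcentration

/-- If `x₁,…,xₙ` are independent Bernoulli(p)-valued (values 1 and 0)
random variables and `g : [0,1]ⁿ → ℝ` is 1-Lipschitz in the ℓ₁ norm, then for
`0 ≤ ε ≤ 1`, `P[|g(X) - E[g(X)]| ≥ εpn] ≤ 2 e^{-ε²pn/3}`. -/
theorem lipschitz_bernoulli_concentration
    {Ω : Type*} [MeasurableSpace Ω] (μ : Measure Ω) [IsProbabilityMeasure μ]
    (n : ℕ) (p : ℝ) (hp0 : 0 ≤ p) (hp1 : p ≤ 1)
    (X : Fin n → Ω → ℝ) (hmeas : ∀ i, Measurable (X i))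
    (hindep : iIndepFun X μ)
    (hdist1 : ∀ i, μ {ω | X i ω = 1} = ENNReal.ofReal p)
    (hdist0 : ∀ i, μ {ω | X i ω = 0} = ENNReal.ofReal (1 - p))
    (g : (Fin n → ℝ) → ℝ)
    (hg : ∀ x y : Fin n → ℝ, (∀ i, x i ∈ Set.Icc (0:ℝ) 1) →
      (∀ i, y i ∈ Set.Icc (0:ℝ) 1) → |g x - g y| ≤ ∑ i, |x i - y i|)
    (ε : ℝ) (hε0 : 0 ≤ ε) (hε1 : ε ≤ 1) :
    (μ {ω | ε * p * n ≤ |g (fun i => X i ω) - ∫ ω', g (fun i => X i ω') ∂μ|}).toReal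
      ≤ 2 * Real.exp (-(ε ^ 2 * p * n) / 3) := by
  rw [← measureReal_def, integral_comp_eq_bernoulliMean hp0 hp1 hmeas hindep hdist1 hdist0,
    measureReal_setOf_comp_eq_sum_filter hp0 hp1 hmeas hindep hdist1 hdist0
      (fun x => ε * p * n ≤ |g x - _|)]
  exact sum_filter_abs_sub_bernoulliMean_le hp0 hp1
    (hasBoundedDifferences_of_abs_sub_le_sum hg) hε0 hε1
end

section
/- Let x₁,…,xₙ be independent random variables taking value b with probability p and 0 with probability 1-p, and let g : [0,b]ⁿ → ℝ be L-Lipschitz in the ℓ₁ norm. Then for all 0 ≤ ε ≤ 1, P[|g(X) - E[g(X)]| ≥ ε p n b L] ≤ 2 e^{-ε²pn/3}, where X = (x₁,…,xₙ). -/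
open MeasureTheory ProbabilityTheory

/-!
Almost surely `X = b • c`, where `c i = (X i = b)` is a vector of independent Bernoulli(`p`) bits,
so `g(X) = G(c)` with `G c = g(b • c)`, and by the ℓ₁-Lipschitz bound flipping one bit changes `G`
by at most `D = L b`. Revealing the bits one at a time (the Doob martingale), each step is,
conditionally, a two-point distribution with gap at most `D`, whose centred exponential moment is
at most `exp (2/3 · p (tD)²)` when `|t| D ≤ 3/4`, by `eᵘ ≤ 1 + u + 2u²/3` for `|u| ≤ 3/4`. The
factor `p` here is what makes the bound scale with `pn` rather than `n`. Chernoff's bound at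
`tD = 3ε/4`, applied on both sides, gives the claim.
-/

open Finset Real

lemma exp_le_one_add_add_two_thirds_mul_sq {u : ℝ} (hu : |u| ≤ 3 / 4) :
    exp u ≤ 1 + u + 2 / 3 * u ^ 2 := by
  -- the cubic remainder `|u|³ · 2/9` of `Real.exp_bound` is at most `u² / 6` when `|u| ≤ 3/4`
  have h := (abs_le.1 (exp_bound (hu.trans (by norm_num)) (n := 3) (by norm_num))).2
  have hcube : |u| ^ 3 = |u| * u ^ 2 := by rw [pow_succ', sq_abs]
  norm_num [sum_range_succ, Nat.factorial, hcube] at h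
  nlinarith [sq_nonneg u, abs_nonneg u]

lemma centered_bernoulli_mgf_le {p u : ℝ} (hp0 : 0 ≤ p) (hu : |u| ≤ 3 / 4) :
    p * exp ((1 - p) * u) + (1 - p) * exp (-(p * u)) ≤ exp (2 / 3 * p * u ^ 2) := by
  have hquad := exp_le_one_add_add_two_thirds_mul_sq hu
  calc _ = exp (-(p * u)) * (1 + p * (exp u - 1)) := by
        rw [show (1 - p) * u = u + -(p * u) by ring, exp_add]
        ring
    _ ≤ exp (-(p * u)) * exp (p * (exp u - 1)) := by
        gcongr
        linarith [add_one_le_exp (p * (exp u - 1))]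
    _ ≤ exp (2 / 3 * p * u ^ 2) := by
        rw [← exp_add]
        gcongr
        nlinarith

lemma convex_comb_exp_le {p x y s D : ℝ} (hp0 : 0 ≤ p) (hxy : |x - y| ≤ D)
    (hs : |s| * D ≤ 3 / 4) :
    p * exp (s * x) + (1 - p) * exp (s * y)
      ≤ exp (2 / 3 * p * (s * D) ^ 2) * exp (s * (p * x + (1 - p) * y)) := by
  have hu : |s * (x - y)| ≤ |s| * D := by
    rw [abs_mul]
    exact mul_le_mul_of_nonneg_left hxy (abs_nonneg s)
  have hsq : (s * (x - y)) ^ 2 ≤ (s * D) ^ 2 := by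
    rw [← sq_abs, ← sq_abs (s * D), abs_mul s D]
    exact pow_le_pow_left₀ (abs_nonneg _) (hu.trans (by gcongr; exact le_abs_self D)) 2
  calc _ = exp (s * (p * x + (1 - p) * y)) *
        (p * exp ((1 - p) * (s * (x - y))) + (1 - p) * exp (-(p * (s * (x - y))))) := by
        rw [show s * x = s * (p * x + (1 - p) * y) + (1 - p) * (s * (x - y)) by ring,
          show s * y = s * (p * x + (1 - p) * y) + -(p * (s * (x - y))) by ring, exp_add, exp_add]
        ring
    _ ≤ exp (s * (p * x + (1 - p) * y)) * exp (2 / 3 * p * (s * (x - y)) ^ 2) := by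
        gcongr
        exact centered_bernoulli_mgf_le hp0 (hu.trans hs)
    _ ≤ _ := by
        rw [mul_comm]
        gcongr

namespace BoolCube

variable {m : ℕ} {p D t : ℝ}

def weight (p : ℝ) (c : Fin m → Bool) : ℝ := ∏ i, if c i then p else 1 - p

def expect (p : ℝ) (f : (Fin m → Bool) → ℝ) : ℝ := ∑ c, weight p c * f c

def HasBoundedDiff (D : ℝ) (f : (Fin m → Bool) → ℝ) : Prop :=
  ∀ c i, |f (Function.update c i true) - f (Function.update c i false)| ≤ D

lemma weight_nonneg (hp0 : 0 ≤ p) (hp1 : p ≤ 1) (c : Fin m → Bool) : 0 ≤ weight p c :=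
  prod_nonneg fun i _ => by split <;> linarith

lemma expect_mono (hp0 : 0 ≤ p) (hp1 : p ≤ 1) {f g : (Fin m → Bool) → ℝ} (h : ∀ c, f c ≤ g c) :
    expect p f ≤ expect p g :=
  sum_le_sum fun c _ => mul_le_mul_of_nonneg_left (h c) (weight_nonneg hp0 hp1 c)

lemma expect_const_mul (K : ℝ) (f : (Fin m → Bool) → ℝ) :
    expect p (fun c => K * f c) = K * expect p f := by
  simp only [expect, mul_sum]
  exact sum_congr rfl fun c _ => mul_left_comm _ _ _

lemma expect_fin_zero (f : (Fin 0 → Bool) → ℝ) : expect p f = f Fin.elim0 := by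
  simp [expect, weight, Subsingleton.elim _ (Fin.elim0 : Fin 0 → Bool)]

lemma expect_fin_succ (f : (Fin (m + 1) → Bool) → ℝ) :
    expect p f = expect p (fun c => p * f (Fin.cons true c) + (1 - p) * f (Fin.cons false c)) := by
  unfold expect
  rw [← (Fin.consEquiv fun _ => Bool).sum_comp, Fintype.sum_prod_type_right]
  refine sum_congr rfl fun c _ => ?_
  simp only [Fintype.sum_bool, Fin.consEquiv, Equiv.coe_fn_mk, weight, Fin.prod_univ_succ,
    Fin.cons_zero, Fin.cons_succ, if_true, Bool.false_eq_true, if_false]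
  ring

lemma HasBoundedDiff.comp_cons {f : (Fin (m + 1) → Bool) → ℝ} (hf : HasBoundedDiff D f)
    (a : Bool) : HasBoundedDiff D (fun c => f (Fin.cons a c)) := fun c i => by
  simpa only [Fin.cons_update] using hf (Fin.cons a c) i.succ

lemma HasBoundedDiff.abs_sub_cons_le {f : (Fin (m + 1) → Bool) → ℝ} (hf : HasBoundedDiff D f)
    (c : Fin m → Bool) : |f (Fin.cons true c) - f (Fin.cons false c)| ≤ D := by
  simpa only [Fin.update_cons_zero] using hf (Fin.cons true c) 0

lemma HasBoundedDiff.convex_comb {f g : (Fin m → Bool) → ℝ} (hp0 : 0 ≤ p) (hp1 : p ≤ 1)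
    (hf : HasBoundedDiff D f) (hg : HasBoundedDiff D g) :
    HasBoundedDiff D (fun c => p * f c + (1 - p) * g c) := fun c i => by
  have hq : 0 ≤ 1 - p := by linarith
  calc _ = |p * (f (Function.update c i true) - f (Function.update c i false))
          + (1 - p) * (g (Function.update c i true) - g (Function.update c i false))| := by
        ring_nf
    _ ≤ p * D + (1 - p) * D := by
        refine (abs_add_le _ _).trans ?_
        rw [abs_mul, abs_mul, abs_of_nonneg hp0, abs_of_nonneg hq]
        gcongr
        exacts [hf c i, hg c i]
    _ = D := by ring

theorem expect_exp_le (hp0 : 0 ≤ p) (hp1 : p ≤ 1) (ht : |t| * D ≤ 3 / 4)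
    (f : (Fin m → Bool) → ℝ) (hf : HasBoundedDiff D f) :
    expect p (fun c => exp (t * (f c - expect p f))) ≤ exp (2 / 3 * m * p * (t * D) ^ 2) := by
  induction m with
  | zero => simp [expect_fin_zero]
  | succ m ih =>
    set F : (Fin m → Bool) → ℝ := fun c => p * f (Fin.cons true c) + (1 - p) * f (Fin.cons false c)
    set K := exp (2 / 3 * p * (t * D) ^ 2)
    have hstep (c : Fin m → Bool) :
        p * exp (t * (f (Fin.cons true c) - expect p F))
          + (1 - p) * exp (t * (f (Fin.cons false c) - expect p F))
        ≤ K * exp (t * (F c - expect p F)) := by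
      convert convex_comb_exp_le hp0 (x := f (Fin.cons true c) - expect p F)
        (y := f (Fin.cons false c) - expect p F) (by simpa using hf.abs_sub_cons_le c) ht
        using 3
      ring
    calc expect p (fun c => exp (t * (f c - expect p f)))
        = expect p (fun c => p * exp (t * (f (Fin.cons true c) - expect p F))
            + (1 - p) * exp (t * (f (Fin.cons false c) - expect p F))) := by
          rw [show expect p f = expect p F from expect_fin_succ f, expect_fin_succ]
      _ ≤ expect p (fun c => K * exp (t * (F c - expect p F))) := expect_mono hp0 hp1 hstep
      _ = K * expect p (fun c => exp (t * (F c - expect p F))) := expect_const_mul _ _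
      _ ≤ K * exp (2 / 3 * m * p * (t * D) ^ 2) := by
          gcongr
          exact ih F ((hf.comp_cons true).convex_comb hp0 hp1 (hf.comp_cons false))
      _ = exp (2 / 3 * (m + 1 : ℕ) * p * (t * D) ^ 2) := by
          rw [← exp_add]
          push_cast
          ring_nf

lemma hasBoundedDiff_of_l1_lipschitz {n : ℕ} {b L : ℝ} (hb : 0 ≤ b) {g : (Fin n → ℝ) → ℝ}
    (hg : ∀ x y : Fin n → ℝ, (∀ i, x i ∈ Set.Icc (0:ℝ) b) →
      (∀ i, y i ∈ Set.Icc (0:ℝ) b) → |g x - g y| ≤ L * ∑ i, |x i - y i|) :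
    HasBoundedDiff (L * b) (fun c => g (fun i => if c i then b else 0)) := by
  intro c i
  have hmem (c' : Fin n → Bool) (j : Fin n) : (if c' j then b else 0) ∈ Set.Icc 0 b := by
    split <;> simp [hb]
  refine (hg _ _ (hmem _) (hmem _)).trans_eq (congrArg (L * ·) ?_)
  rw [Finset.sum_eq_single i (fun j _ hj => by simp [Function.update_of_ne hj]) (by simp)]
  simp [abs_of_nonneg hb]

end BoolCube

theorem measure_abs_ge_le_exp_mul_mgf_add {Ω : Type*} [MeasurableSpace Ω] {μ : Measure Ω}
    [IsFiniteMeasure μ] {Y : Ω → ℝ} {t : ℝ} (a : ℝ) (ht : 0 ≤ t)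
    (hint_pos : Integrable (fun ω => exp (t * Y ω)) μ)
    (hint_neg : Integrable (fun ω => exp (-t * Y ω)) μ) :
    μ.real {ω | a ≤ |Y ω|} ≤ exp (-t * a) * (mgf Y μ t + mgf Y μ (-t)) :=
  calc μ.real {ω | a ≤ |Y ω|} ≤ μ.real ({ω | a ≤ Y ω} ∪ {ω | Y ω ≤ -a}) :=
        measureReal_mono (fun ω (hω : a ≤ |Y ω|) => show a ≤ Y ω ∨ Y ω ≤ -a from
          (le_abs'.1 hω).symm) (measure_ne_top μ _)
    _ ≤ μ.real {ω | a ≤ Y ω} + μ.real {ω | Y ω ≤ -a} := measureReal_union_le _ _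
    _ ≤ exp (-t * a) * mgf Y μ t + exp (-(-t) * -a) * mgf Y μ (-t) :=
        add_le_add (measure_ge_le_exp_mul_mgf a ht hint_pos)
          (measure_le_le_exp_mul_mgf (-a) (by linarith) hint_neg)
    _ = exp (-t * a) * (mgf Y μ t + mgf Y μ (-t)) := by
        rw [show -(-t) * -a = -t * a by ring]
        ring

section EqPattern

variable {Ω : Type*} [MeasurableSpace Ω] {μ : Measure Ω} {n : ℕ} {X : Fin n → Ω → ℝ} {b p : ℝ}

noncomputable def eqPattern (X : Fin n → Ω → ℝ) (b : ℝ) (ω : Ω) : Fin n → Bool :=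
  fun i => decide (X i ω = b)

lemma measurable_decide_eq (b : ℝ) : Measurable fun x : ℝ => decide (x = b) :=
  measurable_to_bool (by simp [Set.preimage, measurableSet_singleton b])

lemma measurable_eqPattern (hmeas : ∀ i, Measurable (X i)) : Measurable (eqPattern X b) :=
  measurable_pi_lambda _ fun i => (measurable_decide_eq b).comp (hmeas i)

variable [IsProbabilityMeasure μ]

lemma measure_eqPattern_preimage_singleton (hmeas : ∀ i, Measurable (X i))
    (hindep : iIndepFun X μ) (hdistb : ∀ i, μ {ω | X i ω = b} = ENNReal.ofReal p)
    (hp0 : 0 ≤ p) (hp1 : p ≤ 1) (c : Fin n → Bool) :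
    μ (eqPattern X b ⁻¹' {c}) = ENNReal.ofReal (BoolCube.weight p c) := by
  set s : Fin n → Set ℝ := fun i => (fun x => decide (x = b)) ⁻¹' {c i}
  have hfactor (i : Fin n) : μ (X i ⁻¹' s i) = ENNReal.ofReal (if c i then p else 1 - p) := by
    cases hc : c i
    · have hcompl : X i ⁻¹' s i = (X i ⁻¹' {b})ᶜ := by ext; simp [s, hc]
      rw [hcompl, prob_compl_eq_one_sub (hmeas i (measurableSet_singleton b)),
        if_neg Bool.false_ne_true, ENNReal.ofReal_sub _ hp0, ENNReal.ofReal_one]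
      exact congrArg (1 - ·) (hdistb i)
    · have heq : X i ⁻¹' s i = {ω | X i ω = b} := by ext; simp [s, hc]
      rw [heq, hdistb]
      rfl
  have hpre : eqPattern X b ⁻¹' {c} = ⋂ i, X i ⁻¹' s i := by
    ext ω
    simp [eqPattern, s, funext_iff]
  rw [hpre, hindep.meas_iInter fun i => ⟨s i, measurable_decide_eq b (measurableSet_singleton _),
    rfl⟩, BoolCube.weight, ENNReal.ofReal_prod_of_nonneg fun i _ => by split <;> linarith]
  exact Finset.prod_congr rfl fun i _ => hfactor i

lemma integrable_comp_eqPattern (hmeas : ∀ i, Measurable (X i)) (h : (Fin n → Bool) → ℝ) :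
    Integrable (fun ω => h (eqPattern X b ω)) μ :=
  (Integrable.of_finite (μ := μ.map (eqPattern X b))).comp_measurable (measurable_eqPattern hmeas)

lemma integral_comp_eqPattern (hmeas : ∀ i, Measurable (X i))
    (hindep : iIndepFun X μ) (hdistb : ∀ i, μ {ω | X i ω = b} = ENNReal.ofReal p)
    (hp0 : 0 ≤ p) (hp1 : p ≤ 1) (h : (Fin n → Bool) → ℝ) :
    ∫ ω, h (eqPattern X b ω) ∂μ = BoolCube.expect p h := by
  have hT := measurable_eqPattern (b := b) hmeas
  rw [← integral_map hT.aemeasurable (measurable_of_countable h).aestronglyMeasurable,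
    integral_fintype Integrable.of_finite]
  refine Finset.sum_congr rfl fun c _ => ?_
  rw [measureReal_def, Measure.map_apply hT (measurableSet_singleton c),
    measure_eqPattern_preimage_singleton hmeas hindep hdistb hp0 hp1,
    ENNReal.toReal_ofReal (BoolCube.weight_nonneg hp0 hp1 c), smul_eq_mul]

lemma ae_eq_ite_eqPattern (hmeas : ∀ i, Measurable (X i)) (hb : b ≠ 0)
    (hdistb : ∀ i, μ {ω | X i ω = b} = ENNReal.ofReal p)
    (hdist0 : ∀ i, μ {ω | X i ω = 0} = ENNReal.ofReal (1 - p)) (hp0 : 0 ≤ p) (hp1 : p ≤ 1) :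
    ∀ᵐ ω ∂μ, (fun i => X i ω) = fun i => if eqPattern X b ω i then b else 0 := by
  have hvalues (i : Fin n) : ∀ᵐ ω ∂μ, X i ω = b ∨ X i ω = 0 := by
    have hdisj : Disjoint {ω | X i ω = b} {ω | X i ω = 0} :=
      Set.disjoint_left.2 fun ω h₁ h₂ => hb (h₁.symm.trans h₂)
    refine (mem_ae_iff_prob_eq_one ((hmeas i (measurableSet_singleton b)).union
      (hmeas i (measurableSet_singleton 0)))).2 ?_
    change μ ({ω | X i ω = b} ∪ {ω | X i ω = 0}) = 1
    rw [measure_union hdisj (hmeas i (measurableSet_singleton 0)), hdistb, hdist0,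
      ← ENNReal.ofReal_add hp0 (by linarith)]
    simp
  filter_upwards [ae_all_iff.2 hvalues] with ω hω
  funext i
  rcases hω i with h | h <;> simp [eqPattern, h, hb.symm]

theorem concentration_comp_eqPattern (hmeas : ∀ i, Measurable (X i)) (hindep : iIndepFun X μ)
    (hdistb : ∀ i, μ {ω | X i ω = b} = ENNReal.ofReal p) (hp0 : 0 ≤ p) (hp1 : p ≤ 1)
    {G : (Fin n → Bool) → ℝ} {D : ℝ} (hD : 0 < D) (hG : BoolCube.HasBoundedDiff D G)
    {ε : ℝ} (hε0 : 0 ≤ ε) (hε1 : ε ≤ 1) :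
    μ.real {ω | ε * p * n * D ≤ |G (eqPattern X b ω) - BoolCube.expect p G|}
      ≤ 2 * exp (-(ε ^ 2 * p * n) / 3) := by
  set Z : Ω → ℝ := fun ω => G (eqPattern X b ω) - BoolCube.expect p G
  have hmgf (s : ℝ) (hs : |s| * D ≤ 3 / 4) : mgf Z μ s ≤ exp (2 / 3 * n * p * (s * D) ^ 2) :=
    (integral_comp_eqPattern hmeas hindep hdistb hp0 hp1 _).trans_le
      (BoolCube.expect_exp_le hp0 hp1 hs G hG)
  have hint (s : ℝ) : Integrable (fun ω => exp (s * Z ω)) μ :=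
    integrable_comp_eqPattern hmeas fun c => exp (s * (G c - BoolCube.expect p G))
  -- `v = t D = 3ε/4` minimises `2v²/3 - εv`, leaving the exponent `-3ε²pn/8`
  set t := 3 * ε / (4 * D)
  have htD : t * D = 3 * ε / 4 := by simp only [t]; field_simp
  have ht : 0 ≤ t := by positivity
  have hs : |t| * D ≤ 3 / 4 := by rw [abs_of_nonneg ht, htD]; linarith
  calc μ.real {ω | ε * p * n * D ≤ |Z ω|}
      ≤ exp (-t * (ε * p * n * D)) * (mgf Z μ t + mgf Z μ (-t)) :=
        measure_abs_ge_le_exp_mul_mgf_add _ ht (hint t) (hint (-t))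
    _ ≤ exp (-(t * D) * (ε * p * n)) * (2 * exp (2 / 3 * n * p * (t * D) ^ 2)) := by
        have hmgf_neg := hmgf (-t) (by rwa [abs_neg])
        rw [neg_mul, neg_sq] at hmgf_neg
        rw [show -t * (ε * p * n * D) = -(t * D) * (ε * p * n) by ring]
        gcongr
        linarith [hmgf t hs]
    _ ≤ 2 * exp (-(ε ^ 2 * p * n) / 3) := by
        rw [htD, mul_left_comm, ← exp_add]
        gcongr
        nlinarith [mul_nonneg (mul_nonneg (sq_nonneg ε) hp0) (Nat.cast_nonneg n : (0:ℝ) ≤ n)]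

end EqPattern

/-- If `x₁,…,xₙ` are independent random variables taking value `b`
with probability `p` and `0` otherwise, and `g : [0,b]ⁿ → ℝ` is `L`-Lipschitz in
the ℓ₁ norm, then for `0 ≤ ε ≤ 1`,
`P[|g(X) - E[g(X)]| ≥ ε p n b L] ≤ 2 e^{-ε²pn/3}`. -/
theorem lipschitz_scaled_bernoulli_concentration
    {Ω : Type*} [MeasurableSpace Ω] (μ : Measure Ω) [IsProbabilityMeasure μ]
    (n : ℕ) (p b L : ℝ) (hp0 : 0 < p) (hp1 : p < 1) (hb : 0 < b) (hL : 0 < L)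
    (X : Fin n → Ω → ℝ) (hmeas : ∀ i, Measurable (X i))
    (hindep : iIndepFun X μ)
    (hdistb : ∀ i, μ {ω | X i ω = b} = ENNReal.ofReal p)
    (hdist0 : ∀ i, μ {ω | X i ω = 0} = ENNReal.ofReal (1 - p))
    (g : (Fin n → ℝ) → ℝ)
    (hg : ∀ x y : Fin n → ℝ, (∀ i, x i ∈ Set.Icc (0:ℝ) b) →
      (∀ i, y i ∈ Set.Icc (0:ℝ) b) → |g x - g y| ≤ L * ∑ i, |x i - y i|)
    (ε : ℝ) (hε0 : 0 ≤ ε) (hε1 : ε ≤ 1) :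
    (μ {ω | ε * p * n * b * L ≤
        |g (fun i => X i ω) - ∫ ω', g (fun i => X i ω') ∂μ|}).toReal
      ≤ 2 * Real.exp (-(ε ^ 2 * p * n) / 3) := by
  set G : (Fin n → Bool) → ℝ := fun c => g (fun i => if c i then b else 0)
  have hae := ae_eq_ite_eqPattern hmeas hb.ne' hdistb hdist0 hp0.le hp1.le
  have hE : ∫ ω, g (fun i => X i ω) ∂μ = BoolCube.expect p G :=
    (integral_congr_ae (hae.mono fun ω h => congrArg g h)).trans
      (integral_comp_eqPattern hmeas hindep hdistb hp0.le hp1.le G)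
  have hevent : {ω | ε * p * n * b * L ≤ |g (fun i => X i ω) - ∫ ω', g (fun i => X i ω') ∂μ|}
      =ᵐ[μ] {ω | ε * p * n * (L * b) ≤ |G (eqPattern X b ω) - BoolCube.expect p G|} :=
    hae.mono fun ω h => show (_ ≤ _) = (_ ≤ _) by
      rw [h, hE, show ε * p * n * b * L = ε * p * n * (L * b) by ring]
  rw [← measureReal_def, measureReal_congr hevent]
  exact concentration_comp_eqPattern hmeas hindep hdistb hp0.le hp1.le (mul_pos hL hb)
    (BoolCube.hasBoundedDiff_of_l1_lipschitz hb.le hg) hε0 hε1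
end

section
/- Let g(d) denote the minimum cost of a flow instance on a metric space where each client c in a set C' has demand d_c, clients outside C' have demand 1, and a special point f' has demand N − Σ_{c∈C'} d_c, where N = |C'|. Suppose every client in C' is within distance R of f'. Then g is R-Lipschitz with respect to the ℓ₁ norm on demand vectors: for any d, d' with d' = d + δ·𝟙_c for some c ∈ C' and δ ≥ 0, |g(d') − g(d)| ≤ δ·R. -/
/-
Pushing `δ ≥ 0` extra units of flow along the single edge from `u` to `w` (both non-centers)
turns any feasible flow for the demand `b` into one for the demand that has `δ` more at `u` and
`δ` less at `w`, at extra cost `δ * dist u w`. So the optimum rises by at most `δ * dist u w`;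
applying this in both directions bounds `|g(b') - g(b)|` by `δ * dist c f' ≤ δ * R`.
-/

open Finset

/-- The set of achievable costs of feasible flows on a finite metric space `V`:
a flow `μ u v ≥ 0` routes mass along metric edges, each non-center node `v ∉ F`
has net outflow equal to its demand `b v`, and each center `f ∈ F` absorbs a
nonnegative amount of flow, at most its capacity `η f`. -/
def flowFeasibleCosts {V : Type*} [Fintype V] [MetricSpace V]
    (F : Finset V) (η : V → ℝ) (b : V → ℝ) : Set ℝ :=
  {y : ℝ | ∃ μ : V → V → ℝ,
    (∀ u v, 0 ≤ μ u v) ∧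
    (∀ v, v ∉ F → (∑ u, μ v u) - (∑ u, μ u v) = b v) ∧
    (∀ f ∈ F, 0 ≤ (∑ u, μ u f) - (∑ u, μ f u) ∧
      (∑ u, μ u f) - (∑ u, μ f u) ≤ η f) ∧
    y = ∑ u, ∑ v, μ u v * dist u v}

/-- The min-cost flow value `g(b)` as a function of the demand vector `b`. -/
noncomputable def flowCost {V : Type*} [Fintype V] [MetricSpace V]
    (F : Finset V) (η : V → ℝ) (b : V → ℝ) : ℝ :=
  sInf (flowFeasibleCosts F η b)

section

variable {V : Type*}

section Demand

variable [DecidableEq V]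

def shiftDemand (b : V → ℝ) (δ : ℝ) (u w : V) : V → ℝ :=
  fun v => b v + δ * (if v = u then 1 else 0) - δ * (if v = w then 1 else 0)

theorem shiftDemand_shiftDemand_swap (b : V → ℝ) (δ : ℝ) (u w : V) :
    shiftDemand (shiftDemand b δ u w) δ w u = b := by
  funext v
  simp only [shiftDemand]
  ring

end Demand

variable [Fintype V] [MetricSpace V]

theorem flowFeasibleCosts_nonneg {F : Finset V} {η b : V → ℝ} {y : ℝ}
    (hy : y ∈ flowFeasibleCosts F η b) : 0 ≤ y := by
  obtain ⟨μ, hμ, -, -, rfl⟩ := hy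
  exact sum_nonneg fun u _ => sum_nonneg fun v _ => mul_nonneg (hμ u v) dist_nonneg

theorem flowFeasibleCosts_bddBelow (F : Finset V) (η b : V → ℝ) :
    BddBelow (flowFeasibleCosts F η b) :=
  ⟨0, fun _ => flowFeasibleCosts_nonneg⟩

variable [DecidableEq V]

theorem add_edge_mem_flowFeasibleCosts {F : Finset V} {η b : V → ℝ} {u w : V}
    (hu : u ∉ F) (hw : w ∉ F) {δ : ℝ} (hδ : 0 ≤ δ) {y : ℝ}
    (hy : y ∈ flowFeasibleCosts F η b) :
    y + δ * dist u w ∈ flowFeasibleCosts F η (shiftDemand b δ u w) := by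
  obtain ⟨μ, hμ, hbal, hcap, rfl⟩ := hy
  set e : V → V → ℝ := fun x z => if x = u then if z = w then δ else 0 else 0 with he
  have he_nonneg (x z : V) : 0 ≤ e x z := by simp only [he]; split_ifs <;> simp [hδ]
  have he_out (x : V) : ∑ z, e x z = if x = u then δ else 0 := by
    simp only [he]; split_ifs <;> simp
  have he_in (z : V) : ∑ x, e x z = if z = w then δ else 0 := by
    simp only [he]; split_ifs <;> simp [*]
  have he_cost : ∑ x, ∑ z, e x z * dist x z = δ * dist u w := by simp [he]
  refine ⟨fun x z => μ x z + e x z, fun x z => add_nonneg (hμ x z) (he_nonneg x z),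
    fun v hv => ?_, fun f hf => ?_, ?_⟩
  · simp only [sum_add_distrib, he_out, he_in, shiftDemand, ← hbal v hv]
    split_ifs <;> ring
  · have hfu : f ≠ u := ne_of_mem_of_not_mem hf hu
    have hfw : f ≠ w := ne_of_mem_of_not_mem hf hw
    simpa only [sum_add_distrib, he_out, he_in, if_neg hfu, if_neg hfw, add_zero]
      using hcap f hf
  · simp only [add_mul, sum_add_distrib, he_cost]

theorem flowCost_shiftDemand_le {F : Finset V} {η b : V → ℝ} {u w : V}
    (hu : u ∉ F) (hw : w ∉ F) {δ : ℝ} (hδ : 0 ≤ δ) (hb : (flowFeasibleCosts F η b).Nonempty) :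
    flowCost F η (shiftDemand b δ u w) ≤ flowCost F η b + δ * dist u w := by
  rw [← sub_le_iff_le_add]
  exact le_csInf hb fun y hy => sub_le_iff_le_add.2 <|
    csInf_le (flowFeasibleCosts_bddBelow F η _) (add_edge_mem_flowFeasibleCosts hu hw hδ hy)

end

theorem flowCost_lipschitz_general {V : Type*} [Fintype V] [MetricSpace V] [DecidableEq V]
    (F : Finset V) (η : V → ℝ) (c f' : V) (hc : c ∉ F) (hf' : f' ∉ F)
    (R δ : ℝ) (hδ : 0 ≤ δ) (hdist : dist c f' ≤ R)
    (b b' : V → ℝ)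
    (hb' : b' = fun v => b v + δ * (if v = c then 1 else 0)
      - δ * (if v = f' then 1 else 0))
    (hfeas : (flowFeasibleCosts F η b).Nonempty)
    (hfeas' : (flowFeasibleCosts F η b').Nonempty) :
    |flowCost F η b' - flowCost F η b| ≤ δ * R := by
  change b' = shiftDemand b δ c f' at hb'
  have hforward : flowCost F η b' ≤ flowCost F η b + δ * dist c f' :=
    hb' ▸ flowCost_shiftDemand_le hc hf' hδ hfeas
  have hbackward : flowCost F η b ≤ flowCost F η b' + δ * dist c f' := by
    have h := flowCost_shiftDemand_le hf' hc hδ hfeas'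
    rwa [hb', shiftDemand_shiftDemand_swap, dist_comm, ← hb'] at h
  have hδR : δ * dist c f' ≤ δ * R := mul_le_mul_of_nonneg_left hdist hδ
  rw [abs_sub_le_iff]
  constructor <;> linarith

/-- The min-cost flow value `g` is `R`-Lipschitz in ℓ₁ with
respect to demands: if `d' = d + δ·𝟙_c - δ·𝟙_{f'}` shifts `δ ≥ 0` units of
demand from the special point `f'` to a client `c` with `dist c f' ≤ R` (both
feasible), then `|g(d') - g(d)| ≤ δ·R`. -/
theorem flowCost_lipschitz {V : Type*} [Fintype V] [MetricSpace V] [DecidableEq V]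
    (F : Finset V) (η : V → ℝ) (c f' : V) (hc : c ∉ F) (hf' : f' ∉ F)
    (hcf : c ≠ f') (R δ : ℝ) (hδ : 0 ≤ δ) (hdist : dist c f' ≤ R)
    (b b' : V → ℝ)
    (hb' : b' = fun v => b v + δ * (if v = c then 1 else 0)
      - δ * (if v = f' then 1 else 0))
    (hfeas : (flowFeasibleCosts F η b).Nonempty)
    (hfeas' : (flowFeasibleCosts F η b').Nonempty) :
    |flowCost F η b' - flowCost F η b| ≤ δ * R :=
  flowCost_lipschitz_general F η c f' hc hf' R δ hδ hdist b b' hb' hfeas hfeas'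
end

section
/- Let (V, dist) be a metric space and let c, f*, ℓ, f ∈ V satisfy: dist(ℓ, f*) ≤ dist(c, f*) (ℓ is the closest assigned client to f*), dist(ℓ, f*) ≥ R, dist(ℓ, f) ≤ (1+ε)R, and dist(ℓ, f*) ≤ (1+ε)R. Then dist(c, f) ≤ (3 + 2ε)·dist(c, f*). -/
theorem dist_le_two_mul_add_dist_of_dist_le {V : Type*} [PseudoMetricSpace V] {c fstar ℓ f : V}
    (hclosest : dist ℓ fstar ≤ dist c fstar) :
    dist c f ≤ 2 * dist c fstar + dist ℓ f :=
  calc dist c f ≤ dist c fstar + dist fstar ℓ + dist ℓ f := dist_triangle4 c fstar ℓ f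
    _ ≤ 2 * dist c fstar + dist ℓ f := by rw [dist_comm fstar ℓ]; linarith

theorem leader_guessing_dist_bound_general {V : Type*} [MetricSpace V]
    (c fstar ℓ f : V) (R ε : ℝ) (hε : 0 ≤ ε)
    (hclosest : dist ℓ fstar ≤ dist c fstar)
    (hlower : R ≤ dist ℓ fstar)
    (hf : dist ℓ f ≤ (1 + ε) * R) :
    dist c f ≤ (3 + 2 * ε) * dist c fstar := by
  have hleader : dist ℓ f ≤ (1 + ε) * dist c fstar :=
    hf.trans (mul_le_mul_of_nonneg_left (hlower.trans hclosest) (by linarith))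
  calc dist c f ≤ 2 * dist c fstar + dist ℓ f := dist_le_two_mul_add_dist_of_dist_le hclosest
    _ ≤ (3 + 2 * ε) * dist c fstar := by
      linarith [mul_nonneg hε (dist_nonneg (x := c) (y := fstar))]

/-- leader-guessing inequality: if `dist(ℓ,f*) ≤ dist(c,f*)`,
`dist(ℓ,f*) ≥ R`, `dist(ℓ,f) ≤ (1+ε)R` and `dist(ℓ,f*) ≤ (1+ε)R`, then
`dist(c,f) ≤ (3+2ε)·dist(c,f*)`. -/
theorem leader_guessing_dist_bound {V : Type*} [MetricSpace V]
    (c fstar ℓ f : V) (R ε : ℝ) (hR : 0 < R) (hε : 0 ≤ ε)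
    (hclosest : dist ℓ fstar ≤ dist c fstar)
    (hlower : R ≤ dist ℓ fstar)
    (hf : dist ℓ f ≤ (1 + ε) * R)
    (hfstar : dist ℓ fstar ≤ (1 + ε) * R) :
    dist c f ≤ (3 + 2 * ε) * dist c fstar :=
  leader_guessing_dist_bound_general c fstar ℓ f R ε hε hclosest hlower hf
end
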